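/- Let λ be a Young diagram with even profile. If k and k′ are even integers with 0 ≤ k ≤ k′ ≤ ht(λ)/2, then mult(λ, k) ≤ mult(λ, k′); that is, k ↦ mult(λ, k) is non-decreasing on even integers between 0 and ht(λ)/2. -/

import Mathlib

open scoped Classical

namespace YoungDiagram

/-- `lam / μ` is a vertical strip of length `k`: `μ ⊆ lam`, the complement consists of
exactly `k` boxes, and no two boxes of the complement lie in the same row. -/
def IsVerticalStrip (μ lam : YoungDiagram) (k : ℕ) : Prop :=
  μ ≤ lam ∧ (lam.cells \ μ.cells).card = k ∧
    ∀ c₁ ∈ lam.cells \ μ.cells, ∀ c₂ ∈ lam.cells \ μ.cells, c₁.1 = c₂.1 → c₁ = c₂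

/-- Every column of `μ` has even length. -/
def HasEvenColumns (μ : YoungDiagram) : Prop := ∀ j, Even (μ.colLen j)

/-- `mult lam k` is the number of subdiagrams `μ ⊆ lam` with even columns such that
`lam / μ` is a vertical strip of length `k`. -/
noncomputable def mult (lam : YoungDiagram) (k : ℕ) : ℕ :=
  Nat.card {μ : YoungDiagram // μ ≤ lam ∧ μ.HasEvenColumns ∧ IsVerticalStrip μ lam k}

/-- The height of a Young diagram: the number of nonempty rows. -/
def ht (lam : YoungDiagram) : ℕ := lam.colLen 0

/-- A Young diagram is mildly odd if for every odd `m` it has at most one column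
of length exactly `m`. -/
def MildlyOdd (lam : YoungDiagram) : Prop :=
  ∀ m : ℕ, Odd m → ∀ j₁ j₂ : ℕ, lam.colLen j₁ = m → lam.colLen j₂ = m → j₁ = j₂

/-- The number of columns of odd length. -/
noncomputable def oddColumns (lam : YoungDiagram) : ℕ :=
  ((Finset.range (lam.rowLen 0)).filter fun j => Odd (lam.colLen j)).card

/-- The profile of a Young diagram: for the distinct nonzero row lengths
`ℓ₀ > ℓ₁ > … > ℓₙ`, the list of multiplicities `hᵢ = #{rows of length ℓᵢ}`. -/
noncomputable def profile (lam : YoungDiagram) : List ℕ :=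
  lam.rowLens.dedup.map fun ℓ => lam.rowLens.count ℓ

/-- Every entry of the profile is even. -/
def HasEvenProfile (lam : YoungDiagram) : Prop := ∀ h ∈ lam.profile, Even h

end YoungDiagram



namespace BddComp

/-- Number of tuples with bounded parts and given sum. -/
def N : List ℕ → ℕ → ℕ
  | [], m => if m = 0 then 1 else 0
  | b :: bs, m => ∑ i ∈ Finset.range (b + 1), if i ≤ m then N bs (m - i) else 0

@[simp] lemma N_nil (m : ℕ) : N [] m = if m = 0 then 1 else 0 := rfl

lemma N_cons (b : ℕ) (bs : List ℕ) (m : ℕ) :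
    N (b :: bs) m = ∑ i ∈ Finset.range (b + 1), if i ≤ m then N bs (m - i) else 0 := rfl

lemma N_zero_of_lt : ∀ (bs : List ℕ) (m : ℕ), bs.sum < m → N bs m = 0
  | [], m, h => by simp only [N_nil]; rw [if_neg]; simp at h; omega
  | b :: bs, m, h => by
    rw [N_cons]
    refine Finset.sum_eq_zero fun i hi => ?_
    simp only [Finset.mem_range] at hi
    split
    · exact N_zero_of_lt bs (m - i) (by simp [List.sum_cons] at h; omega)
    · rfl

lemma N_symm : ∀ (bs : List ℕ) (m : ℕ), m ≤ bs.sum → N bs (bs.sum - m) = N bs m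
  | [], m, h => by simp at h; simp [h]
  | b :: bs, m, h => by
    simp only [List.sum_cons] at h ⊢
    rw [N_cons, N_cons, ← Finset.sum_range_reflect]
    refine Finset.sum_congr rfl fun i hi => ?_
    simp only [Finset.mem_range, Nat.add_sub_cancel] at hi ⊢
    have hib : i ≤ b := by omega
    by_cases hmi : m ≤ bs.sum + i
    · rw [if_pos (by omega)]
      have h2 : b + bs.sum - m - (b - i) = bs.sum + i - m := by omega
      rw [h2]
      by_cases him : i ≤ m
      · rw [if_pos him]
        have h3 : bs.sum + i - m = bs.sum - (m - i) := by omega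
        rw [h3, N_symm bs (m - i) (by omega)]
      · rw [if_neg him]
        exact N_zero_of_lt bs _ (by omega)
    · rw [if_neg (by omega), if_pos (by omega)]
      exact (N_zero_of_lt bs _ (by omega)).symm

lemma N_mono : ∀ (bs : List ℕ) (x y : ℕ), x ≤ y → x + y ≤ bs.sum → N bs x ≤ N bs y
  | [], x, y, hxy, hs => by
    simp only [List.sum_nil, Nat.le_zero, Nat.add_eq_zero] at hs
    simp [hs.1, hs.2]
  | b :: bs, x, y, hxy, hs => by
    simp only [List.sum_cons] at hs
    have step : ∀ m : ℕ, 2 * m + 1 ≤ b + bs.sum → N (b :: bs) m ≤ N (b :: bs) (m + 1) := by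
      intro m hm
      rw [N_cons, N_cons, Finset.sum_range_succ, Finset.sum_range_succ']
      have hcong : ∀ i ∈ Finset.range b,
          (if i + 1 ≤ m + 1 then N bs (m + 1 - (i + 1)) else 0)
          = (if i ≤ m then N bs (m - i) else 0) := by
        intro i _
        simp [Nat.succ_le_succ_iff, Nat.succ_sub_succ]
      rw [Finset.sum_congr rfl hcong]
      have h0 : (if 0 ≤ m + 1 then N bs (m + 1 - 0) else 0) = N bs (m + 1) := by simp
      rw [h0]
      have hlast : (if b ≤ m then N bs (m - b) else 0) ≤ N bs (m + 1) := by
        split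
        · exact N_mono bs (m - b) (m + 1) (by omega) (by omega)
        · exact Nat.zero_le _
      exact Nat.add_le_add le_rfl hlast
    have chain : ∀ y, 2 * y ≤ b + bs.sum + 1 → ∀ x, x ≤ y →
        N (b :: bs) x ≤ N (b :: bs) y := by
      intro y
      induction y with
      | zero =>
        intro _ x hx
        have hx0 : x = 0 := Nat.le_zero.mp hx
        subst hx0; exact le_rfl
      | succ n ih =>
        intro hy x hx
        rcases Nat.lt_or_ge x (n + 1) with h | h
        · exact le_trans (ih (by omega) x (by omega)) (step n (by omega))
        · have : x = n + 1 := by omega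
          subst this; exact le_rfl
    rcases le_or_gt (2 * y) (b + bs.sum + 1) with h | h
    · exact chain y h x hxy
    · have hyS : y ≤ b + bs.sum := by omega
      have hsym : N (b :: bs) ((b :: bs).sum - y) = N (b :: bs) y := N_symm _ y (by simp; omega)
      simp only [List.sum_cons] at hsym
      rw [← hsym]
      exact chain (b + bs.sum - y) (by omega) x (by omega)

end BddComp

namespace BddComp
open Finset in
lemma card_pi_sum : ∀ (n : ℕ) (b : ℕ → ℕ) (m : ℕ),
    ((Fintype.piFinset fun i : Fin n => Finset.range (b i + 1)).filter
      fun t => ∑ i, t i = m).card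
    = N (List.ofFn fun i : Fin n => b (i : ℕ)) m
  | 0, b, m => by
    by_cases hm : m = 0
    · subst hm
      rw [Finset.filter_true_of_mem (fun t _ => by simp)]
      simp [N]
    · rw [Finset.filter_false_of_mem (fun t _ => by simp only [Finset.univ_eq_empty, Finset.sum_empty]; omega)]
      simp [N, hm]
  | n + 1, b, m => by
    classical
    rw [List.ofFn_succ, N_cons]
    rw [Finset.card_eq_sum_card_fiberwise (f := fun t => t 0)
      (t := Finset.range (b 0 + 1))
      (fun t ht => by
        simp only [Finset.mem_coe, Finset.mem_filter, Fintype.mem_piFinset] at ht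
        exact ht.1 0)]
    refine Finset.sum_congr rfl fun a ha => ?_
    simp only [Finset.mem_range] at ha
    rw [Finset.filter_filter]
    by_cases ham : a ≤ m
    · rw [if_pos ham]
      have key : ((Fintype.piFinset fun i : Fin (n+1) => Finset.range (b i + 1)).filter
            fun t => (∑ i, t i = m) ∧ t 0 = a).card
          = ((Fintype.piFinset fun i : Fin n => Finset.range (b (i.succ : ℕ) + 1)).filter
            fun s => ∑ i, s i = m - a).card := by
        refine Finset.card_bij' (fun t _ => Fin.tail t) (fun s _ => Fin.cons a s) ?_ ?_ ?_ ?_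
        · intro t ht
          simp only [Finset.mem_filter, Fintype.mem_piFinset] at ht ⊢
          obtain ⟨hpi, hsum, h0⟩ := ht
          refine ⟨fun i => hpi i.succ, ?_⟩
          rw [Fin.sum_univ_succ, h0] at hsum
          have ht' : ∑ i : Fin n, Fin.tail t i = ∑ i : Fin n, t i.succ := rfl
          rw [ht']
          omega
        · intro s hs
          simp only [Finset.mem_filter, Fintype.mem_piFinset] at hs ⊢
          obtain ⟨hpi, hsum⟩ := hs
          refine ⟨fun i => ?_, ?_, ?_⟩
          · induction i using Fin.cases with
            | zero => simpa using ha
            | succ i => simpa using hpi i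
          · rw [Fin.sum_univ_succ]
            simp only [Fin.cons_zero, Fin.cons_succ]
            omega
          · simp
        · intro t ht
          simp only [Finset.mem_filter] at ht
          have h := Fin.cons_self_tail (α := fun _ => ℕ) t
          rw [ht.2.2] at h
          exact h
        · intro s _
          funext i
          simp [Fin.tail, Fin.cons_succ]
      rw [key]
      have := card_pi_sum n (fun x => b (x + 1)) (m - a)
      simp only [Fin.val_succ] at this ⊢
      exact this
    · rw [if_neg ham]
      rw [Finset.filter_false_of_mem, Finset.card_empty]
      intro t ht
      simp only [Fintype.mem_piFinset] at ht
      rintro ⟨hsum, h0⟩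
      rw [Fin.sum_univ_succ, h0] at hsum
      omega

end BddComp



namespace YDProof

open YoungDiagram

lemma le_of_forall_lt_lt {a b : ℕ} (H : ∀ i, i < a → i < b) : a ≤ b := by
  by_contra h
  exact absurd (H b (by omega)) (lt_irrefl b)

lemma colLen_eq {μ : YoungDiagram} {j x : ℕ} (h : ∀ i, (i, j) ∈ μ ↔ i < x) :
    μ.colLen j = x := by
  refine le_antisymm (le_of_forall_lt_lt fun i hi => ?_) (le_of_forall_lt_lt fun i hi => ?_)
  · exact (h i).mp (mem_iff_lt_colLen.mpr hi)
  · exact mem_iff_lt_colLen.mp ((h i).mpr hi)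

lemma colLen_le_of_le {μ lam : YoungDiagram} (h : μ ≤ lam) (j : ℕ) :
    μ.colLen j ≤ lam.colLen j := by
  refine le_of_forall_lt_lt fun i hi => ?_
  exact mem_iff_lt_colLen.mp (h (mem_iff_lt_colLen.mpr hi))

lemma colLen_eq_zero' {lam : YoungDiagram} {j : ℕ} (h : lam.rowLen 0 ≤ j) :
    lam.colLen j = 0 := by
  refine colLen_eq fun i => ?_
  simp only [Nat.not_lt_zero, iff_false]
  intro hmem
  have h0 : (0, j) ∈ lam := lam.up_left_mem (Nat.zero_le i) le_rfl hmem
  rw [mem_iff_lt_rowLen] at h0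
  omega

lemma count_rowLens (lam : YoungDiagram) (ℓ : ℕ) :
    lam.rowLens.count ℓ
      = ((Finset.range (lam.colLen 0)).filter fun i => lam.rowLen i = ℓ).card := by
  have h : ((Finset.range (lam.colLen 0)).filter fun i => lam.rowLen i = ℓ).card
      = List.countP (fun i => decide (lam.rowLen i = ℓ)) (List.range (lam.colLen 0)) := by
    rw [List.countP_eq_length_filter]; rfl
  rw [h, YoungDiagram.rowLens, List.count, List.countP_map]
  refine List.countP_congr fun i _ => ?_
  simp [Function.comp]

lemma colLen_succ_add (lam : YoungDiagram) (j : ℕ) :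
    lam.colLen j = lam.colLen (j + 1) + lam.rowLens.count (j + 1) := by
  classical
  set n0 := lam.colLen 0 with hn0
  have hfilter : ∀ x : ℕ, ((Finset.range n0).filter fun i => x < lam.rowLen i)
      = Finset.range (lam.colLen x) := by
    intro x
    ext i
    simp only [Finset.mem_filter, Finset.mem_range]
    rw [← mem_iff_lt_rowLen, mem_iff_lt_colLen]
    constructor
    · exact fun h => h.2
    · exact fun h => ⟨lt_of_lt_of_le h (lam.colLen_anti 0 x (Nat.zero_le x)), h⟩
  have h1 : lam.colLen j = ((Finset.range n0).filter fun i => j < lam.rowLen i).card := by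
    rw [hfilter j, Finset.card_range]
  have h2 : ((Finset.range n0).filter fun i => j < lam.rowLen i)
      = ((Finset.range n0).filter fun i => j + 1 < lam.rowLen i)
        ∪ ((Finset.range n0).filter fun i => lam.rowLen i = j + 1) := by
    rw [← Finset.filter_or]
    refine Finset.filter_congr fun i _ => ?_
    constructor
    · intro h; omega
    · intro h; omega
  have hdisj : Disjoint ((Finset.range n0).filter fun i => j + 1 < lam.rowLen i)
      ((Finset.range n0).filter fun i => lam.rowLen i = j + 1) := by
    rw [Finset.disjoint_filter]
    intro i _ h1 h2
    omega
  rw [h1, h2, Finset.card_union_of_disjoint hdisj, count_rowLens]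
  congr 1
  rw [hfilter (j + 1), Finset.card_range]

lemma even_colLen (lam : YoungDiagram) (hep : ∀ h ∈ lam.rowLens.dedup.map fun ℓ => lam.rowLens.count ℓ, Even h) (j : ℕ) :
    Even (lam.colLen j) := by
  have hcount : ∀ ℓ : ℕ, Even (lam.rowLens.count ℓ) := by
    intro ℓ
    by_cases h : ℓ ∈ lam.rowLens
    · exact hep _ (List.mem_map.mpr ⟨ℓ, List.mem_dedup.mpr h, rfl⟩)
    · rw [List.count_eq_zero_of_not_mem h]; exact Even.zero
  -- downward induction
  have key : ∀ d j, lam.rowLen 0 ≤ j + d → Even (lam.colLen j) := by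
    intro d
    induction d with
    | zero => intro j h; rw [colLen_eq_zero' (by omega)]; exact Even.zero
    | succ n ih =>
      intro j h
      by_cases hj : lam.rowLen 0 ≤ j
      · rw [colLen_eq_zero' hj]; exact Even.zero
      · rw [colLen_succ_add lam j]
        exact (ih (j + 1) (by omega)).add (hcount (j + 1))
  exact key (lam.rowLen 0) j (by omega)

end YDProof

namespace YDProof2
open YoungDiagram YDProof

lemma card_sdiff_eq (lam μ : YoungDiagram) (h : μ ≤ lam) :
    (lam.cells \ μ.cells).card
      = ∑ j ∈ Finset.range (lam.rowLen 0), (lam.colLen j - μ.colLen j) := by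
  classical
  rw [Finset.card_eq_sum_card_fiberwise (f := fun x => x.2)
      (t := Finset.range (lam.rowLen 0)) ?hf]
  case hf =>
    rintro ⟨a, b⟩ hx
    simp only [Finset.mem_coe, Finset.mem_sdiff, mem_cells] at hx
    have h0 : (0, b) ∈ lam := lam.up_left_mem (Nat.zero_le a) le_rfl hx.1
    rw [mem_iff_lt_rowLen] at h0
    simpa using h0
  refine Finset.sum_congr rfl fun j hj => ?_
  have hset : (lam.cells \ μ.cells).filter (fun x => x.2 = j)
      = (Finset.Ico (μ.colLen j) (lam.colLen j)).image (fun i => (i, j)) := by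
    ext ⟨a, b⟩
    simp only [Finset.mem_filter, Finset.mem_sdiff, mem_cells, Finset.mem_image,
      Finset.mem_Ico, mem_iff_lt_colLen, Prod.mk.injEq]
    constructor
    · rintro ⟨⟨h1, h2⟩, rfl⟩
      exact ⟨a, ⟨by omega, h1⟩, rfl, rfl⟩
    · rintro ⟨i, ⟨hi1, hi2⟩, rfl, rfl⟩
      exact ⟨⟨hi2, by omega⟩, rfl⟩
  rw [hset, Finset.card_image_of_injective _ (fun a b hab => by simpa using hab), Nat.card_Ico]

lemma colLen_succ_le_of_strip {lam μ : YoungDiagram} (hsub : μ ≤ lam)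
    (hrow : ∀ c₁ ∈ lam.cells \ μ.cells, ∀ c₂ ∈ lam.cells \ μ.cells, c₁.1 = c₂.1 → c₁ = c₂)
    (j : ℕ) : lam.colLen (j + 1) ≤ μ.colLen j := by
  by_contra hc
  push_neg at hc
  set x := μ.colLen j with hx
  have hp2 : (x, j + 1) ∈ lam.cells \ μ.cells := by
    simp only [Finset.mem_sdiff, mem_cells, mem_iff_lt_colLen]
    refine ⟨hc, ?_⟩
    have := μ.colLen_anti j (j + 1) (by omega)
    omega
  have hp1 : (x, j) ∈ lam.cells \ μ.cells := by
    simp only [Finset.mem_sdiff, mem_cells, mem_iff_lt_colLen]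
    have := lam.colLen_anti j (j + 1) (by omega)
    omega
  have := hrow _ hp1 _ hp2 rfl
  simp at this

/-- The subdiagram of `lam` obtained by truncating column `j` to length `r j`. -/
def subOfBnd (lam : YoungDiagram) (r : ℕ → ℕ)
    (hr : ∀ j, lam.colLen (j + 1) ≤ r j ∧ r j ≤ lam.colLen j) : YoungDiagram where
  cells := lam.cells.filter fun x => x.1 < r x.2
  isLowerSet := by
    have hanti : Antitone r :=
      antitone_nat_of_succ_le fun j => le_trans (hr (j + 1)).2 (hr j).1
    rintro ⟨i2, j2⟩ ⟨i1, j1⟩ hle hmem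
    simp only [Finset.coe_filter, Set.mem_setOf_eq, mem_cells] at hmem ⊢
    obtain ⟨hi, hj⟩ := Prod.mk_le_mk.mp hle
    refine ⟨lam.isLowerSet hle hmem.1, ?_⟩
    calc i1 ≤ i2 := hi
      _ < r j2 := hmem.2
      _ ≤ r j1 := hanti hj


lemma mem_subOfBnd {lam : YoungDiagram} {r : ℕ → ℕ} {hr : ∀ j, lam.colLen (j + 1) ≤ r j ∧ r j ≤ lam.colLen j}
    {i j : ℕ} : (i, j) ∈ subOfBnd lam r hr ↔ (i, j) ∈ lam ∧ i < r j := by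
  show (i, j) ∈ (lam.cells.filter fun x => x.1 < r x.2) ↔ _
  simp [subOfBnd]

lemma subOfBnd_le {lam : YoungDiagram} {r : ℕ → ℕ}
    {hr : ∀ j, lam.colLen (j + 1) ≤ r j ∧ r j ≤ lam.colLen j} :
    subOfBnd lam r hr ≤ lam := fun x hx => by
  rcases x with ⟨i, j⟩
  exact (mem_subOfBnd.mp hx).1

lemma colLen_subOfBnd {lam : YoungDiagram} {r : ℕ → ℕ}
    {hr : ∀ j, lam.colLen (j + 1) ≤ r j ∧ r j ≤ lam.colLen j} (j : ℕ) :
    (subOfBnd lam r hr).colLen j = r j := by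
  refine colLen_eq fun i => ?_
  rw [mem_subOfBnd, mem_iff_lt_colLen]
  have := (hr j).2
  constructor
  · exact fun h => h.2
  · exact fun h => ⟨by omega, h⟩

end YDProof2


namespace YDProof2
open YoungDiagram YDProof BddComp

lemma eq_of_colLen_eq {μ ν : YoungDiagram} (h : ∀ j, μ.colLen j = ν.colLen j) : μ = ν := by
  ext ⟨i, j⟩
  rw [mem_cells, mem_cells, mem_iff_lt_colLen, mem_iff_lt_colLen, h j]

lemma mult_eq_N (lam : YoungDiagram) (hec : ∀ j, Even (lam.colLen j)) (m : ℕ) :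
    lam.mult (2 * m)
      = N (List.ofFn fun i : Fin (lam.rowLen 0) =>
          (lam.colLen (i : ℕ) - lam.colLen ((i : ℕ) + 1)) / 2) m := by
  classical
  set b : ℕ → ℕ := fun j => (lam.colLen j - lam.colLen (j + 1)) / 2 with hb
  have hanti : ∀ j, lam.colLen (j + 1) ≤ lam.colLen j :=
    fun j => lam.colLen_anti j (j + 1) (by omega)
  have hb2 : ∀ j, 2 * b j = lam.colLen j - lam.colLen (j + 1) := by
    intro j
    have h1 := hec j
    have h2 := hec (j + 1)
    have h3 := hanti j
    rw [Nat.even_iff] at h1 h2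
    simp only [hb]
    omega
  have hczero : ∀ j, lam.rowLen 0 ≤ j → lam.colLen j = 0 := fun j hj => colLen_eq_zero' hj
  set B : Finset (Fin (lam.rowLen 0) → ℕ) :=
    (Fintype.piFinset fun i : Fin (lam.rowLen 0) => Finset.range (b (i : ℕ) + 1)).filter
      (fun t => ∑ i, t i = m) with hBdef
  -- the forward map lands in B
  have f_mem : ∀ μ : YoungDiagram, μ ≤ lam → μ.HasEvenColumns →
      YoungDiagram.IsVerticalStrip μ lam (2 * m) →
      (fun i : Fin (lam.rowLen 0) => (lam.colLen (i : ℕ) - μ.colLen (i : ℕ)) / 2) ∈ B := by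
    intro μ hsub hev hstrip
    obtain ⟨-, hcard, hrow⟩ := hstrip
    have hle : ∀ j, μ.colLen j ≤ lam.colLen j := colLen_le_of_le hsub
    have hge : ∀ j, lam.colLen (j + 1) ≤ μ.colLen j :=
      colLen_succ_le_of_strip hsub hrow
    have h2t : ∀ j, 2 * ((lam.colLen j - μ.colLen j) / 2)
        = lam.colLen j - μ.colLen j := by
      intro j
      have h1 := hec j
      have h2 := hev j
      have h3 := hle j
      rw [Nat.even_iff] at h1 h2
      omega
    rw [hBdef, Finset.mem_filter, Fintype.mem_piFinset]
    constructor
    · intro i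
      rw [Finset.mem_range]
      have := hge (i : ℕ)
      have := h2t (i : ℕ)
      have := hb2 (i : ℕ)
      have := hanti (i : ℕ)
      have := hle (i : ℕ)
      omega
    · -- sum condition
      show ∑ i : Fin (lam.rowLen 0), (lam.colLen (i : ℕ) - μ.colLen (i : ℕ)) / 2 = m
      have hsum : ∑ j ∈ Finset.range (lam.rowLen 0), (lam.colLen j - μ.colLen j) = 2 * m := by
        rw [← card_sdiff_eq lam μ hsub, hcard]
      have e1 : (∑ i : Fin (lam.rowLen 0), 2 * ((lam.colLen (i : ℕ) - μ.colLen (i : ℕ)) / 2))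
          = ∑ i : Fin (lam.rowLen 0), (lam.colLen (i : ℕ) - μ.colLen (i : ℕ)) :=
        Finset.sum_congr rfl fun i _ => h2t (i : ℕ)
      have e2 : (∑ i : Fin (lam.rowLen 0), (lam.colLen (i : ℕ) - μ.colLen (i : ℕ)))
          = ∑ j ∈ Finset.range (lam.rowLen 0), (lam.colLen j - μ.colLen j) :=
        (Finset.sum_range fun j => lam.colLen j - μ.colLen j).symm
      have h2 : 2 * ∑ i : Fin (lam.rowLen 0), (lam.colLen (i : ℕ) - μ.colLen (i : ℕ)) / 2
          = 2 * m := by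
        rw [Finset.mul_sum, e1, e2, hsum]
      omega
  -- step 1 : Nat.card equality via bijection
  have hcards : lam.mult (2 * m) = B.card := by
    rw [YoungDiagram.mult, ← Nat.card_eq_finsetCard]
    refine Nat.card_congr (Equiv.ofBijective
      (fun p => ⟨fun i : Fin (lam.rowLen 0) => (lam.colLen (i : ℕ) - (p.1).colLen (i : ℕ)) / 2,
        f_mem p.1 p.2.1 p.2.2.1 p.2.2.2⟩) ⟨?_, ?_⟩)
    · -- injective
      rintro ⟨μ, hμsub, hμev, hμstrip⟩ ⟨ν, hνsub, hνev, hνstrip⟩ heq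
      simp only [Subtype.mk.injEq] at heq ⊢
      have heq' := congrFun heq
      refine eq_of_colLen_eq fun j => ?_
      by_cases hj : j < lam.rowLen 0
      · have h1 := heq' ⟨j, hj⟩
        simp only [Fin.val_mk] at h1
        have e1 := hec j
        have e2 := hμev j
        have e3 := hνev j
        have l1 := colLen_le_of_le hμsub j
        have l2 := colLen_le_of_le hνsub j
        rw [Nat.even_iff] at e1 e2 e3
        omega
      · have h0 := hczero j (by omega)
        have l1 := colLen_le_of_le hμsub j
        have l2 := colLen_le_of_le hνsub j
        omega
    · -- surjective
      rintro ⟨t, ht⟩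
      rw [hBdef, Finset.mem_filter, Fintype.mem_piFinset] at ht
      obtain ⟨hpi, hsum⟩ := ht
      have hpi' : ∀ i : Fin (lam.rowLen 0), t i ≤ b (i : ℕ) := by
        intro i
        have := hpi i
        rw [Finset.mem_range] at this
        omega
      set te : ℕ → ℕ := fun j => if h : j < lam.rowLen 0 then t ⟨j, h⟩ else 0 with hte
      have hteval : ∀ i : Fin (lam.rowLen 0), te (i : ℕ) = t i := by
        intro i
        simp only [hte]
        rw [dif_pos i.isLt]
      have hteb : ∀ j, 2 * te j ≤ lam.colLen j - lam.colLen (j + 1) := by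
        intro j
        simp only [hte]
        split
        · next h =>
            have h1 := hpi' ⟨j, h⟩
            have h2 := hb2 j
            simp only [Fin.val_mk] at h1
            omega
        · omega
      set r : ℕ → ℕ := fun j => lam.colLen j - 2 * te j with hrdef
      have hr : ∀ j, lam.colLen (j + 1) ≤ r j ∧ r j ≤ lam.colLen j := by
        intro j
        have := hteb j
        have := hanti j
        constructor <;> simp only [hrdef] <;> omega
      set μ := subOfBnd lam r hr with hμdef
      have hcol : ∀ j, μ.colLen j = r j := fun j => colLen_subOfBnd j
      have hrc : ∀ j, lam.colLen j - r j = 2 * te j := by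
        intro j
        have := hteb j
        have := hanti j
        simp only [hrdef]
        omega
      have hμsub : μ ≤ lam := subOfBnd_le
      have hμev : μ.HasEvenColumns := by
        intro j
        rw [hcol j]
        have h1 := hec j
        have h2 := hteb j
        rw [Nat.even_iff] at h1 ⊢
        simp only [hrdef]
        omega
      have hcard : (lam.cells \ μ.cells).card = 2 * m := by
        rw [card_sdiff_eq lam μ hμsub]
        have hstep : ∀ j ∈ Finset.range (lam.rowLen 0),
            lam.colLen j - μ.colLen j = 2 * te j := by
          intro j _
          rw [hcol j]
          exact hrc j
        rw [Finset.sum_congr rfl hstep, ← Finset.mul_sum]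
        have e1 : (∑ j ∈ Finset.range (lam.rowLen 0), te j)
            = ∑ i : Fin (lam.rowLen 0), te (i : ℕ) := Finset.sum_range fun j => te j
        have e2 : (∑ i : Fin (lam.rowLen 0), te (i : ℕ))
            = ∑ i : Fin (lam.rowLen 0), t i := Finset.sum_congr rfl fun i _ => hteval i
        rw [e1, e2, hsum]
      have hrow : ∀ c₁ ∈ lam.cells \ μ.cells, ∀ c₂ ∈ lam.cells \ μ.cells,
          c₁.1 = c₂.1 → c₁ = c₂ := by
        rintro ⟨x1, j1⟩ hc1 ⟨x2, j2⟩ hc2 hxx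
        simp only at hxx
        subst hxx
        simp only [Finset.mem_sdiff, mem_cells] at hc1 hc2
        have key : ∀ a b2 : ℕ, a < b2 → (x1, a) ∈ lam → (x1, a) ∉ μ →
            (x1, b2) ∈ lam → False := by
          intro a b2 hab ha hna hbmem
          have h1 : r a ≤ x1 := by
            by_contra hcon
            push_neg at hcon
            exact hna (mem_subOfBnd.mpr ⟨ha, hcon⟩)
          have h2 : x1 < lam.colLen b2 := mem_iff_lt_colLen.mp hbmem
          have h3 : lam.colLen b2 ≤ lam.colLen (a + 1) :=
            lam.colLen_anti (a + 1) b2 (by omega)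
          have h4 := (hr a).1
          omega
        rcases Nat.lt_trichotomy j1 j2 with h | h | h
        · exact absurd (key j1 j2 h hc1.1 hc1.2 hc2.1) not_false
        · rw [h]
        · exact absurd (key j2 j1 h hc2.1 hc2.2 hc1.1) not_false
      refine ⟨⟨μ, hμsub, hμev, hμsub, hcard, hrow⟩, ?_⟩
      apply Subtype.ext
      funext i
      show (lam.colLen (i : ℕ) - μ.colLen (i : ℕ)) / 2 = t i
      rw [hcol (i : ℕ), hrc (i : ℕ), hteval i]
      omega
  rw [hcards, hBdef, card_pi_sum]

end YDProof2

/-- for a diagram with even profile, `mult lam` is non-decreasing on even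
integers between `0` and `ht lam / 2`. -/
theorem mult_monotone_of_evenProfile (lam : YoungDiagram) (hep : lam.HasEvenProfile)
    (k k' : ℕ) (hk : Even k) (hk' : Even k')
    (hle : k ≤ k') (hub : k' ≤ lam.ht / 2) :
    lam.mult k ≤ lam.mult k' := by
  classical
  have hec : ∀ j, Even (lam.colLen j) := YDProof.even_colLen lam hep
  obtain ⟨m, hm⟩ := hk
  obtain ⟨m', hm'⟩ := hk'
  have h2 : k = 2 * m := by omega
  have h2' : k' = 2 * m' := by omega
  rw [h2, h2', YDProof2.mult_eq_N lam hec m, YDProof2.mult_eq_N lam hec m']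
  refine BddComp.N_mono _ m m' (by omega) ?_
  have hanti : ∀ j, lam.colLen (j + 1) ≤ lam.colLen j :=
    fun j => lam.colLen_anti j (j + 1) (by omega)
  have htel : ∀ n, ∑ i ∈ Finset.range n, (lam.colLen i - lam.colLen (i + 1))
      = lam.colLen 0 - lam.colLen n := by
    intro n
    induction n with
    | zero => simp
    | succ n ih =>
      rw [Finset.sum_range_succ, ih]
      have h1 := hanti n
      have h0 : lam.colLen n ≤ lam.colLen 0 := lam.colLen_anti 0 n (by omega)
      omega
  have hsum : 2 * (List.ofFn fun i : Fin (lam.rowLen 0) =>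
      (lam.colLen (i : ℕ) - lam.colLen ((i : ℕ) + 1)) / 2).sum = lam.colLen 0 := by
    rw [List.sum_ofFn, Finset.mul_sum]
    have e1 : (∑ i : Fin (lam.rowLen 0), 2 * ((lam.colLen (i : ℕ) - lam.colLen ((i : ℕ) + 1)) / 2))
        = ∑ i : Fin (lam.rowLen 0), (lam.colLen (i : ℕ) - lam.colLen ((i : ℕ) + 1)) := by
      refine Finset.sum_congr rfl fun i _ => ?_
      have h1 := hec (i : ℕ)
      have h2 := hec ((i : ℕ) + 1)
      have h3 := hanti (i : ℕ)
      rw [Nat.even_iff] at h1 h2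
      omega
    have e2 : (∑ i : Fin (lam.rowLen 0), (lam.colLen (i : ℕ) - lam.colLen ((i : ℕ) + 1)))
        = ∑ j ∈ Finset.range (lam.rowLen 0), (lam.colLen j - lam.colLen (j + 1)) :=
      (Finset.sum_range fun j => lam.colLen j - lam.colLen (j + 1)).symm
    rw [e1, e2, htel, YDProof.colLen_eq_zero' (le_refl (lam.rowLen 0))]
    omega
  have hub' : k' ≤ lam.colLen 0 / 2 := hub
  have heven0 := hec 0
  rw [Nat.even_iff] at heven0
  omega
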